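/- arXiv:1307.8347 — 4 statements merged into one kernel-verified Lean document; each statement's English description precedes it below -/
import Mathlib

section
/- Let x ∈ ℝⁿ and u = (u₁,...,u_k) be pairwise orthogonal unit vectors in ℝⁿ. The family of (x,u)-simplexes ordered by inclusion is down-directed: if C₁ and C₂ are (x,u)-simplexes, then C₁ ∩ C₂ contains an (x,u)-simplex. -/
open Filter Topology

noncomputable section

abbrev E (n : ℕ) := EuclideanSpace ℝ (Fin n)

/-- The vertices of the simplex `C_{x,u,λ}`: the `j`-th vertex is
`x + λ₁u₁ + ⋯ + λ_ju_j`. -/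
def cVert {n k : ℕ} (x : E n) (u : Fin k → E n) (lam : Fin k → ℝ) (j : Fin (k+1)) : E n :=
  x + ∑ i : Fin k, if (i : ℕ) < (j : ℕ) then lam i • u i else 0

/-- The simplex `C_{x,u,λ} = conv(x, x+λ₁u₁, …, x+λ₁u₁+⋯+λ_ku_k)`. -/
def cSimplex {n k : ℕ} (x : E n) (u : Fin k → E n) (lam : Fin k → ℝ) : Set (E n) :=
  convexHull ℝ (Set.range (cVert x u lam))

/-- `resid u s v = v - p_{s-1}(v)`, the residue of `v` after orthogonal projection onto
`span(u₁,…,u_{s-1})` (indices below `s`). -/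
def resid {n k : ℕ} (u : Fin k → E n) (s : Fin k) (v : E n) : E n :=
  v - (Submodule.orthogonalProjectionOnto (Submodule.span ℝ (u '' {j | (j : ℕ) < (s : ℕ)})) v : E n)

/-- The sequence `z` determines `u` as a Bouligand–Severi `k`-tangent of `X` at `x`. -/
def DeterminesBS {n k : ℕ} (X : Set (E n)) (x : E n) (u : Fin k → E n) (z : ℕ → E n) : Prop :=
  Orthonormal ℝ u ∧ (∀ i, z i ∈ X) ∧ Tendsto z atTop (𝓝 x) ∧
  (∀ i, z i - x ∉ Submodule.span ℝ (Set.range u)) ∧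
  ∀ s : Fin k,
    Tendsto (fun i => ‖resid u s (z i - x)‖⁻¹ • resid u s (z i - x)) atTop (𝓝 (u s))

/-- `u` is a Bouligand–Severi `k`-tangent of `X` at `x`. -/
def IsBSTangent {n k : ℕ} (X : Set (E n)) (x : E n) (u : Fin k → E n) : Prop :=
  ∃ z : ℕ → E n, DeterminesBS X x u z

/-- A point of `ℝⁿ` all of whose coordinates are rational. -/
def RationalPoint {n : ℕ} (v : E n) : Prop := ∀ i, ∃ q : ℚ, v i = (q : ℝ)

/-- `u` is a rationally outgoing Bouligand–Severi `k`-tangent of `X` at `x`: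
there are a rational simplex `S = conv(range v)`, a face `F = conv(v '' W)` of `S`, and
`λ ∈ ℝ_{>0}^k` with `C_{x,u,λ} ⊆ S`, `C_{x,u,λ} ⊄ F` and `F ∩ X = S ∩ X`. -/
def RationallyOutgoing {n k : ℕ} (X : Set (E n)) (x : E n) (u : Fin k → E n) : Prop :=
  IsBSTangent X x u ∧
  ∃ (m : ℕ) (v : Fin (m+1) → E n), AffineIndependent ℝ v ∧ (∀ j, RationalPoint (v j)) ∧
    ∃ (W : Set (Fin (m+1))) (lam : Fin k → ℝ), (∀ i, 0 < lam i) ∧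
      cSimplex x u lam ⊆ convexHull ℝ (Set.range v) ∧
      ¬ cSimplex x u lam ⊆ convexHull ℝ (v '' W) ∧
      convexHull ℝ (v '' W) ∩ X = convexHull ℝ (Set.range v) ∩ X

lemma vert_mem {n k : ℕ} (x : E n) (u : Fin k → E n) (lam : Fin k → ℝ)
    (c : Fin k → ℝ) (h0 : ∀ i, 0 ≤ c i) (h1 : ∀ i, c i ≤ 1)
    (hmono : ∀ i j : Fin k, i ≤ j → c j ≤ c i) :
    (x + ∑ i, (c i * lam i) • u i) ∈ cSimplex x u lam := by
  classical
  set s : ℕ → ℝ := fun p => if hp : p = 0 then 1 else if h : p ≤ k then c ⟨p-1, by omega⟩ else 0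
    with hsdef
  have s0 : s 0 = 1 := by simp [hsdef]
  have ssucc : ∀ i : Fin k, s ((i:ℕ)+1) = c i := by
    intro i
    have : (i:ℕ)+1 ≤ k := i.isLt
    simp only [hsdef, Nat.succ_ne_zero, dif_neg, this, dif_pos]
    congr
  have szero : ∀ p, k < p → s p = 0 := by
    intro p hp
    have h1 : p ≠ 0 := by omega
    have h2 : ¬ p ≤ k := by omega
    simp [hsdef, h1, h2]
  have snn : ∀ p, 0 ≤ s p := by
    intro p
    by_cases hp : p = 0
    · simp [hsdef, hp]
    · by_cases h : p ≤ k
      · simp only [hsdef, hp, dif_neg, h, dif_pos]; exact h0 _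
      · simp [hsdef, hp, h]
  have smono : ∀ p, s (p+1) ≤ s p := by
    intro p
    by_cases hp : p = 0
    · subst hp; rw [s0]
      by_cases h : 1 ≤ k
      · simp only [hsdef, Nat.one_ne_zero, dif_neg, h, dif_pos]; exact h1 _
      · simp [hsdef, h]
    · by_cases h : p + 1 ≤ k
      · have hpk : p ≤ k := by omega
        simp only [hsdef, Nat.succ_ne_zero, dif_neg, h, dif_pos, hp, hpk]
        exact hmono _ _ (by simp only [Fin.le_def]; omega)
      · rw [szero _ (by omega)]; exact snn p
  set t : ℕ → ℝ := fun p => s p - s (p+1) with htdef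
  have ht0 : ∀ p, 0 ≤ t p := fun p => sub_nonneg.mpr (smono p)
  have htsum : ∑ p : Fin (k+1), t p = 1 := by
    rw [Fin.sum_univ_eq_sum_range t (k+1), Finset.sum_range_sub' s (k+1), s0,
      szero _ (by omega), sub_zero]
  have key : ∀ i : Fin k,
      (∑ p : Fin (k+1), if (i:ℕ) < (p:ℕ) then t (p:ℕ) else 0) = c i := by
    intro i
    rw [Fin.sum_univ_eq_sum_range (fun p => if (i:ℕ) < p then t p else 0) (k+1)]
    set g : ℕ → ℝ := fun p => if (i:ℕ) < p then s p else s ((i:ℕ)+1) with hgdef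
    have hg : ∀ p, (if (i:ℕ) < p then t p else 0) = g p - g (p+1) := by
      intro p
      by_cases h : (i:ℕ) < p
      · simp [hgdef, h, Nat.lt_succ_of_lt h, htdef]
      · by_cases h' : (i:ℕ) < p + 1
        · have : (i:ℕ) = p := by omega
          simp [hgdef, h, h', this]
        · simp [hgdef, h, h']
    rw [Finset.sum_congr rfl fun p _ => hg p, Finset.sum_range_sub' g (k+1)]
    have hik : (i:ℕ) < k + 1 := by omega
    simp [hgdef, hik, szero _ (by omega : k < k+1), ssucc i]
  have hmem := Finset.centerMass_mem_convexHull (t := Finset.univ)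
    (w := fun p : Fin (k+1) => t p) (z := cVert x u lam)
    (fun p _ => ht0 p) (by rw [htsum]; norm_num) (fun p _ => Set.mem_range_self p)
  rw [Finset.centerMass, htsum] at hmem
  simp only [inv_one, one_smul] at hmem
  rw [cSimplex]
  convert hmem using 1
  rw [eq_comm]
  calc ∑ p : Fin (k+1), t (p:ℕ) • cVert x u lam p
      = ∑ p : Fin (k+1), (t (p:ℕ) • x
          + ∑ i : Fin k, (if (i:ℕ) < (p:ℕ) then t (p:ℕ) else 0) • (lam i • u i)) := by
        apply Finset.sum_congr rfl; intro p _
        rw [cVert, smul_add, Finset.smul_sum]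
        congr 1
        apply Finset.sum_congr rfl; intro i _
        by_cases h : (i:ℕ) < (p:ℕ) <;> simp [h]
    _ = (∑ p : Fin (k+1), t (p:ℕ)) • x
          + ∑ i : Fin k, (∑ p : Fin (k+1), if (i:ℕ) < (p:ℕ) then t (p:ℕ) else 0) • (lam i • u i) := by
        rw [Finset.sum_add_distrib, Finset.sum_comm, Finset.sum_smul]
        congr 1
        apply Finset.sum_congr rfl; intro i _
        rw [Finset.sum_smul]
    _ = x + ∑ i : Fin k, (c i * lam i) • u i := by
        rw [htsum, one_smul]
        congr 1
        apply Finset.sum_congr rfl; intro i _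
        rw [key i, mul_smul]

lemma cSimplex_subset {n k : ℕ} (x : E n) (u : Fin k → E n) (lam eps : Fin k → ℝ)
    (hlam : ∀ i, 0 < lam i) (heps : ∀ i, 0 ≤ eps i) (hle : ∀ i, eps i ≤ lam i)
    (hmono : ∀ i j : Fin k, i ≤ j → eps j / lam j ≤ eps i / lam i) :
    cSimplex x u eps ⊆ cSimplex x u lam := by
  rw [cSimplex]
  apply convexHull_min _ (convex_convexHull ℝ _)
  rintro _ ⟨j, rfl⟩
  have hv : cVert x u eps j
      = x + ∑ i : Fin k, (((if (i:ℕ) < (j:ℕ) then eps i / lam i else 0)) * lam i) • u i := by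
    rw [cVert]
    congr 1
    apply Finset.sum_congr rfl; intro i _
    by_cases h : (i:ℕ) < (j:ℕ)
    · simp [h, div_mul_cancel₀ _ (hlam i).ne']
    · simp [h]
  rw [hv]
  apply vert_mem
  · intro i
    by_cases h : (i:ℕ) < (j:ℕ) <;> simp [h, div_nonneg (heps i) (hlam i).le]
  · intro i
    by_cases h : (i:ℕ) < (j:ℕ) <;>
      simp [h, (div_le_one (hlam i)).mpr (hle i), zero_le_one]
  · intro i i' hii'
    by_cases h' : (i':ℕ) < (j:ℕ)
    · have h : (i:ℕ) < (j:ℕ) := lt_of_le_of_lt hii' h'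
      simpa [h, h'] using hmono i i' hii'
    · by_cases h : (i:ℕ) < (j:ℕ) <;>
        simp [h, h', div_nonneg (heps i) (hlam i).le]

theorem stmt2_aux {n k : ℕ} (x : E n) (u : Fin k → E n)
    (lam₁ lam₂ : Fin k → ℝ) (h1 : ∀ i, 0 < lam₁ i) (h2 : ∀ i, 0 < lam₂ i) :
    ∃ eps : Fin k → ℝ, (∀ i, 0 < eps i) ∧
      cSimplex x u eps ⊆ cSimplex x u lam₁ ∩ cSimplex x u lam₂ := by
  set m : Fin k → ℝ := fun i => min (lam₁ i) (lam₂ i) with hm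
  have hm0 : ∀ i, 0 < m i := fun i => lt_min (h1 i) (h2 i)
  set r : Fin k → ℝ := fun i => min (m i / lam₁ i) (m i / lam₂ i) with hr
  have hr0 : ∀ i, 0 < r i := fun i =>
    lt_min (div_pos (hm0 i) (h1 i)) (div_pos (hm0 i) (h2 i))
  have hr1 : ∀ i, r i ≤ 1 :=
    fun i => le_trans (min_le_left _ _) ((div_le_one (h1 i)).mpr (min_le_left _ _))
  set t : ℝ := ∏ i, r i with ht
  have ht0 : 0 < t := Finset.prod_pos fun i _ => hr0 i
  have ht1 : t ≤ 1 := Finset.prod_le_one (fun i _ => (hr0 i).le) (fun i _ => hr1 i)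
  have htr : ∀ i, t ≤ r i := by
    intro i
    rw [ht, ← Finset.mul_prod_erase Finset.univ r (Finset.mem_univ i)]
    calc r i * ∏ j ∈ Finset.univ.erase i, r j
        ≤ r i * 1 := by
          apply mul_le_mul_of_nonneg_left _ (hr0 i).le
          exact Finset.prod_le_one (fun j _ => (hr0 j).le) (fun j _ => hr1 j)
      _ = r i := mul_one _
  set eps : Fin k → ℝ := fun i => m i * t ^ (i:ℕ) with he
  have heps0 : ∀ i, 0 < eps i := fun i => mul_pos (hm0 i) (pow_pos ht0 _)
  -- generic verification against a lam that dominates m and with t ≤ m i / lam i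
  have main : ∀ lam : Fin k → ℝ, (∀ i, 0 < lam i) → (∀ i, m i ≤ lam i) →
      (∀ i, t ≤ m i / lam i) → cSimplex x u eps ⊆ cSimplex x u lam := by
    intro lam hlam hmle htle
    apply cSimplex_subset x u lam eps hlam (fun i => (heps0 i).le)
    · intro i
      calc eps i = m i * t ^ (i:ℕ) := rfl
        _ ≤ m i * 1 := by
            apply mul_le_mul_of_nonneg_left _ (hm0 i).le
            exact pow_le_one₀ ht0.le ht1
        _ = m i := mul_one _
        _ ≤ lam i := hmle i
    · intro i i' hii'
      rcases eq_or_lt_of_le hii' with h | h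
      · rw [h]
      · have e1 : eps i' / lam i' = (m i' / lam i') * t ^ (i':ℕ) := by
          simp only [he]; ring
        have e2 : (m i' / lam i') * t ^ (i':ℕ) ≤ 1 * t ^ (i':ℕ) :=
          mul_le_mul_of_nonneg_right ((div_le_one (hlam i')).mpr (hmle i')) (pow_pos ht0 _).le
        have e3 : t ^ (i':ℕ) ≤ t ^ ((i:ℕ)+1) :=
          pow_le_pow_of_le_one ht0.le ht1 (Nat.succ_le_of_lt (Fin.lt_def.mp h))
        have hstep : eps i' / lam i' ≤ t ^ ((i:ℕ)+1) := by
          rw [e1]; exact le_trans e2 (by rw [one_mul]; exact e3)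
        calc eps i' / lam i' ≤ t ^ ((i:ℕ)+1) := hstep
          _ = t * t ^ (i:ℕ) := by ring
          _ ≤ (m i / lam i) * t ^ (i:ℕ) :=
              mul_le_mul_of_nonneg_right (htle i) (pow_pos ht0 _).le
          _ = eps i / lam i := by simp only [he]; ring
  refine ⟨eps, heps0, Set.subset_inter (main lam₁ h1 (fun i => min_le_left _ _)
    (fun i => le_trans (htr i) (min_le_left _ _)))
    (main lam₂ h2 (fun i => min_le_right _ _)
    (fun i => le_trans (htr i) (min_le_right _ _)))⟩

/-- The family of `(x,u)`-simplexes is down-directed: the intersection of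
two of them contains a third. -/
theorem stmt2 {n k : ℕ} (x : E n) (u : Fin k → E n) (hu : Orthonormal ℝ u)
    (lam₁ lam₂ : Fin k → ℝ) (h1 : ∀ i, 0 < lam₁ i) (h2 : ∀ i, 0 < lam₂ i) :
    ∃ eps : Fin k → ℝ, (∀ i, 0 < eps i) ∧
      cSimplex x u eps ⊆ cSimplex x u lam₁ ∩ cSimplex x u lam₂ := by
  exact stmt2_aux x u lam₁ lam₂ h1 h2
end
end

section
/- Let P ⊆ ℝⁿ be a polyhedron (a finite union of simplexes), X ⊆ P a closed set, x ∈ X, and u = (u₁,...,u_k) pairwise orthogonal unit vectors forming a Bouligand–Severi k-tangent of X at x. Then P contains an (x,u)-simplex, i.e. there exists λ ∈ ℝ_{>0}^k with C_{x,u,λ} ⊆ P. -/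
open Filter Topology

noncomputable section

lemma tangent_dir_le {n k : ℕ} (f : E n →ᵃ[ℝ] ℝ) (x : E n) (u : Fin k → E n) (z : ℕ → E n)
    (hz : ∀ i, f (z i) ≤ 0) (hx0 : f x = 0)
    (hres : ∀ s : Fin k,
      Tendsto (fun i => ‖resid u s (z i - x)‖⁻¹ • resid u s (z i - x)) atTop (𝓝 (u s)))
    (s : Fin k) (hprev : ∀ t : Fin k, t < s → f.linear (u t) = 0) :
    f.linear (u s) ≤ 0 := by
  have hker : Submodule.span ℝ (u '' {j : Fin k | (j : ℕ) < (s : ℕ)}) ≤ LinearMap.ker f.linear := by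
    rw [Submodule.span_le]
    rintro _ ⟨t, ht, rfl⟩
    exact hprev t (by exact ht)
  have hresle : ∀ i, f.linear (resid u s (z i - x)) ≤ 0 := by
    intro i
    have hproj : f.linear
        ((Submodule.orthogonalProjectionOnto (Submodule.span ℝ (u '' {j : Fin k | (j : ℕ) < (s : ℕ)}))
          (z i - x) : E n)) = 0 :=
      hker (Submodule.orthogonalProjectionOnto _ (z i - x)).2
    have hfz : f (z i) = f.linear (z i - x) + f x := by
      have := f.map_vadd x (z i - x)
      simpa [vadd_eq_add, sub_add_cancel] using this
    have : f.linear (z i - x) ≤ 0 := by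
      have := hz i
      rw [hfz, hx0] at this
      linarith
    rw [resid, map_sub, hproj]
    linarith
  have hterm : ∀ i, f.linear (‖resid u s (z i - x)‖⁻¹ • resid u s (z i - x)) ≤ 0 := by
    intro i
    rw [map_smul, smul_eq_mul]
    exact mul_nonpos_of_nonneg_of_nonpos (inv_nonneg.2 (norm_nonneg _)) (hresle i)
  have hcont : Continuous f.linear := f.linear.continuous_of_finiteDimensional
  have htend : Tendsto (fun i => f.linear (‖resid u s (z i - x)‖⁻¹ • resid u s (z i - x)))
      atTop (𝓝 (f.linear (u s))) := (hcont.tendsto _).comp (hres s)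
  exact le_of_tendsto htend (Filter.Eventually.of_forall hterm)


lemma numeric {k : ℕ} (a : ℝ) (c : Fin k → ℝ) (ha : a ≤ 0)
    (hc : a = 0 → ∀ s : Fin k, (∀ t : Fin k, t < s → c t = 0) → c s ≤ 0) :
    ∃ δ : ℝ, 0 < δ ∧ ∀ ε : ℝ, 0 < ε → ε ≤ δ → ∀ r : Fin (k+1),
      a + ∑ i : Fin k, (if (i:ℕ) < (r:ℕ) then ε^((i:ℕ)+1) * c i else 0) ≤ 0 := by
  set C : ℝ := ∑ i : Fin k, |c i| with hC
  have hC0 : 0 ≤ C := Finset.sum_nonneg fun i _ => abs_nonneg _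
  rcases lt_or_eq_of_le ha with haneg | ha0
  · refine ⟨min 1 ((-a)/(C+1)), lt_min one_pos (div_pos (by linarith) (by linarith)), ?_⟩
    intro ε hε hεδ r
    have hε1 : ε ≤ 1 := hεδ.trans (min_le_left _ _)
    have hbound : ∑ i : Fin k, (if (i:ℕ) < (r:ℕ) then ε^((i:ℕ)+1) * c i else 0)
        ≤ ε * C := by
      rw [hC, Finset.mul_sum]
      refine Finset.sum_le_sum fun i _ => ?_
      split_ifs with h
      · calc ε^((i:ℕ)+1) * c i ≤ ε^((i:ℕ)+1) * |c i| :=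
              mul_le_mul_of_nonneg_left (le_abs_self _) (pow_nonneg hε.le _)
          _ ≤ ε * |c i| := by
              refine mul_le_mul_of_nonneg_right ?_ (abs_nonneg _)
              calc ε^((i:ℕ)+1) ≤ ε^1 := pow_le_pow_of_le_one hε.le hε1 (by omega)
                _ = ε := pow_one ε
      · positivity
    have h2 : ε * C ≤ (-a)/(C+1) * C := by
      refine mul_le_mul_of_nonneg_right (hεδ.trans (min_le_right _ _)) hC0
    have h3 : (-a)/(C+1) * C < -a := by
      rw [div_mul_eq_mul_div, div_lt_iff₀ (by linarith)]
      nlinarith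
    linarith
  · -- a = 0
    subst ha0
    by_cases hall : ∀ i : Fin k, c i = 0
    · refine ⟨1, one_pos, fun ε hε hε1 r => ?_⟩
      have : ∀ i : Fin k, (if (i:ℕ) < (r:ℕ) then ε^((i:ℕ)+1) * c i else 0) = 0 := by
        intro i; split_ifs <;> simp [hall i]
      simp [this]
    · push_neg at hall
      obtain ⟨i₀, hi₀⟩ := hall
      have hne : (Finset.univ.filter (fun i : Fin k => c i ≠ 0)).Nonempty :=
        ⟨i₀, Finset.mem_filter.2 ⟨Finset.mem_univ _, hi₀⟩⟩
      set s₀ : Fin k := (Finset.univ.filter (fun i : Fin k => c i ≠ 0)).min' hne with hs₀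
      have hs₀mem := (Finset.univ.filter (fun i : Fin k => c i ≠ 0)).min'_mem hne
      have hs₀ne : c s₀ ≠ 0 := (Finset.mem_filter.1 hs₀mem).2
      have hprev : ∀ t : Fin k, t < s₀ → c t = 0 := by
        intro t ht
        by_contra h
        exact absurd (Finset.min'_le _ t (Finset.mem_filter.2 ⟨Finset.mem_univ _, h⟩))
          (not_le.2 ht)
      have hcs₀ : c s₀ < 0 := lt_of_le_of_ne (hc rfl s₀ hprev) hs₀ne
      refine ⟨min 1 ((-c s₀)/(C+1)), lt_min one_pos (div_pos (by linarith) (by linarith)), ?_⟩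
      intro ε hε hεδ r
      have hε1 : ε ≤ 1 := hεδ.trans (min_le_left _ _)
      by_cases hr : (s₀:ℕ) < (r:ℕ)
      · -- split off the s₀ term
        have hsplit :
            ∑ i : Fin k, (if (i:ℕ) < (r:ℕ) then ε^((i:ℕ)+1) * c i else 0)
            = ε^((s₀:ℕ)+1) * c s₀
              + ∑ i ∈ Finset.univ.erase s₀, (if (i:ℕ) < (r:ℕ) then ε^((i:ℕ)+1) * c i else 0) := by
          rw [← Finset.add_sum_erase _ _ (Finset.mem_univ s₀), if_pos hr]
        have hrest : ∑ i ∈ Finset.univ.erase s₀,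
            (if (i:ℕ) < (r:ℕ) then ε^((i:ℕ)+1) * c i else 0)
            ≤ ε^((s₀:ℕ)+2) * C := by
          calc ∑ i ∈ Finset.univ.erase s₀, (if (i:ℕ) < (r:ℕ) then ε^((i:ℕ)+1) * c i else 0)
              ≤ ∑ i ∈ Finset.univ.erase s₀, ε^((s₀:ℕ)+2) * |c i| := by
                refine Finset.sum_le_sum fun i hi => ?_
                have hi' : i ≠ s₀ := Finset.ne_of_mem_erase hi
                split_ifs with h
                · rcases lt_or_gt_of_ne hi' with hlt | hgt
                  · simp [hprev i hlt]
                  · have : (s₀:ℕ)+2 ≤ (i:ℕ)+1 := by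
                      have : (s₀:ℕ) < (i:ℕ) := hgt
                      omega
                    calc ε^((i:ℕ)+1) * c i ≤ ε^((i:ℕ)+1) * |c i| :=
                          mul_le_mul_of_nonneg_left (le_abs_self _) (pow_nonneg hε.le _)
                      _ ≤ ε^((s₀:ℕ)+2) * |c i| :=
                          mul_le_mul_of_nonneg_right
                            (pow_le_pow_of_le_one hε.le hε1 this) (abs_nonneg _)
                · positivity
            _ ≤ ∑ i : Fin k, ε^((s₀:ℕ)+2) * |c i| := by
                refine Finset.sum_le_sum_of_subset_of_nonneg (Finset.erase_subset _ _)
                  fun i _ _ => by positivity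
            _ = ε^((s₀:ℕ)+2) * C := by rw [hC, Finset.mul_sum]
        have hεsmall : ε * C ≤ -c s₀ := by
          have h2 : ε * C ≤ (-c s₀)/(C+1) * C :=
            mul_le_mul_of_nonneg_right (hεδ.trans (min_le_right _ _)) hC0
          have h3 : (-c s₀)/(C+1) * C ≤ -c s₀ := by
            rw [div_mul_eq_mul_div, div_le_iff₀ (by linarith)]
            nlinarith
          linarith
        have hkey : ε^((s₀:ℕ)+2) * C ≤ ε^((s₀:ℕ)+1) * (-c s₀) := by
          have : ε^((s₀:ℕ)+2) * C = ε^((s₀:ℕ)+1) * (ε * C) := by ring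
          rw [this]
          exact mul_le_mul_of_nonneg_left hεsmall (pow_nonneg hε.le _)
        rw [hsplit]
        nlinarith [pow_nonneg hε.le ((s₀:ℕ)+1)]
      · -- r ≤ s₀ : every nonzero term has i < r ≤ s₀ hence c i = 0
        have : ∀ i : Fin k, (if (i:ℕ) < (r:ℕ) then ε^((i:ℕ)+1) * c i else 0) = 0 := by
          intro i
          split_ifs with h
          · have : i < s₀ := by
              have : (i:ℕ) < (s₀:ℕ) := by omega
              exact this
            rw [hprev i this, mul_zero]
          · rfl
        simp [this]

lemma hull_char {V : Type} [NormedAddCommGroup V] [NormedSpace ℝ V] [FiniteDimensional ℝ V]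
    {ι : Type} [Fintype ι] (b : AffineBasis ι ℝ V) (S : Set ι) :
    convexHull ℝ (b '' S) = {y | (∀ i, 0 ≤ b.coord i y) ∧ ∀ i, i ∉ S → b.coord i y = 0} := by
  classical
  apply le_antisymm
  · apply convexHull_min
    · rintro _ ⟨i₀, hi₀, rfl⟩
      constructor
      · intro i
        rw [b.coord_apply]
        split_ifs <;> norm_num
      · intro i hi
        rw [b.coord_apply, if_neg]
        rintro rfl; exact hi hi₀
    · have : {y | (∀ i, 0 ≤ b.coord i y) ∧ ∀ i, i ∉ S → b.coord i y = 0}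
          = (⋂ i, (b.coord i) ⁻¹' Set.Ici 0) ∩ ⋂ i ∈ {i | i ∉ S}, (b.coord i) ⁻¹' {0} := by
        ext y; simp [Set.mem_iInter, forall_and]
      rw [this]
      refine Convex.inter (convex_iInter fun i => (convex_Ici (0:ℝ)).affine_preimage _) ?_
      exact convex_iInter₂ fun i _ => (convex_singleton (0:ℝ)).affine_preimage _
  · rintro y ⟨h0, hz⟩
    have hsum1 : ∑ i ∈ S.toFinset, b.coord i y = 1 := by
      have h1 : ∑ i ∈ S.toFinset, b.coord i y = ∑ i : ι, b.coord i y := by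
        refine Finset.sum_subset (Finset.subset_univ _) ?_
        intro i _ hi
        exact hz i (by simpa using hi)
      rw [h1, b.sum_coord_apply_eq_one]
    have hy : S.toFinset.affineCombination ℝ b (fun i => b.coord i y) = y := by
      have huniv := b.affineCombination_coord_eq_self y
      rw [Finset.affineCombination_indicator_subset (fun i => b.coord i y) b
        (S.toFinset.subset_univ)] at *
      rw [← huniv]
      congr 1
      funext i
      by_cases hi : i ∈ S
      · simp [Set.indicator, hi]
      · simp [Set.indicator, hi, hz i hi]
    rw [← hy, affineCombination_eq_centerMass hsum1]
    refine Finset.centerMass_mem_convexHull _ (fun i _ => h0 i) (by rw [hsum1]; norm_num) ?_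
    intro i hi
    exact ⟨i, by simpa using hi, rfl⟩

lemma keyA {n k : ℕ} {ι : Type} [Fintype ι] (F : ι → (E n →ᵃ[ℝ] ℝ))
    (x : E n) (u : Fin k → E n) (z : ℕ → E n)
    (hz : ∀ j i, F j (z i) ≤ 0)
    (hzx : Tendsto z atTop (𝓝 x))
    (hres : ∀ s : Fin k,
      Tendsto (fun i => ‖resid u s (z i - x)‖⁻¹ • resid u s (z i - x)) atTop (𝓝 (u s))) :
    ∃ lam : Fin k → ℝ, (∀ s, 0 < lam s) ∧ cSimplex x u lam ⊆ {y | ∀ j, F j y ≤ 0} := by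
  classical
  have hxle : ∀ j, F j x ≤ 0 := by
    intro j
    have hcont : Continuous (F j) := (F j).continuous_of_finiteDimensional
    exact le_of_tendsto ((hcont.tendsto _).comp hzx) (Filter.Eventually.of_forall (hz j))
  have hnum : ∀ j : ι, ∃ δ : ℝ, 0 < δ ∧ ∀ ε : ℝ, 0 < ε → ε ≤ δ → ∀ r : Fin (k+1),
      F j x + ∑ i : Fin k, (if (i:ℕ) < (r:ℕ) then ε^((i:ℕ)+1) * (F j).linear (u i) else 0) ≤ 0 := by
    intro j
    refine numeric (F j x) (fun i => (F j).linear (u i)) (hxle j) ?_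
    intro hx0 s hprevs
    exact tangent_dir_le (F j) x u z (hz j) hx0 hres s hprevs
  choose δ hδpos hδ using hnum
  set ε : ℝ := ∏ j : ι, min (δ j) 1 with hε
  have hεpos : 0 < ε := Finset.prod_pos fun j _ => lt_min (hδpos j) one_pos
  have hεle : ∀ j, ε ≤ δ j := by
    intro j
    calc ε = min (δ j) 1 * ∏ j' ∈ Finset.univ.erase j, min (δ j') 1 := by
            rw [hε, ← Finset.mul_prod_erase _ _ (Finset.mem_univ j)]
      _ ≤ min (δ j) 1 * 1 := by
            refine mul_le_mul_of_nonneg_left ?_ (le_min (hδpos j).le zero_le_one)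
            exact Finset.prod_le_one (fun j' _ => le_min (hδpos j').le zero_le_one)
              (fun j' _ => min_le_right _ _)
      _ ≤ δ j := by rw [mul_one]; exact min_le_left _ _
  refine ⟨fun i => ε^((i:ℕ)+1), fun i => pow_pos hεpos _, ?_⟩
  have hconv : Convex ℝ {y : E n | ∀ j, F j y ≤ 0} := by
    have : {y : E n | ∀ j, F j y ≤ 0} = ⋂ j, (F j) ⁻¹' Set.Iic 0 := by
      ext y; simp [Set.mem_iInter]
    rw [this]
    exact convex_iInter fun j => (convex_Iic (0:ℝ)).affine_preimage (F j)
  refine convexHull_min ?_ hconv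
  rintro _ ⟨r, rfl⟩ j
  have hv : F j (cVert x u (fun i => ε^((i:ℕ)+1)) r)
      = F j x + ∑ i : Fin k, (if (i:ℕ) < (r:ℕ) then ε^((i:ℕ)+1) * (F j).linear (u i) else 0) := by
    rw [cVert]
    have h1 : F j (x + ∑ i : Fin k, if (i : ℕ) < (r : ℕ) then (ε^((i:ℕ)+1)) • u i else 0)
        = (F j).linear (∑ i : Fin k, if (i : ℕ) < (r : ℕ) then (ε^((i:ℕ)+1)) • u i else 0)
          + F j x := by
      have := (F j).map_vadd x (∑ i : Fin k, if (i : ℕ) < (r : ℕ) then (ε^((i:ℕ)+1)) • u i else 0)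
      simpa [vadd_eq_add, add_comm] using this
    rw [h1, map_sum, add_comm]
    congr 1
    refine Finset.sum_congr rfl fun i _ => ?_
    split_ifs with h
    · rw [map_smul, smul_eq_mul]
    · exact map_zero _
  rw [hv]
  exact hδ j ε hεpos (hεle j) r


/-- If `P` is a polyhedron (finite union of simplexes), `X ⊆ P` is closed and
`u` is a Bouligand–Severi `k`-tangent of `X` at `x ∈ X`, then `P` contains an `(x,u)`-simplex. -/
theorem stmt5 {n k : ℕ} (P : Set (E n))
    (hP : ∃ (N : ℕ) (m : Fin N → ℕ) (v : ∀ i : Fin N, Fin (m i + 1) → E n),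
      (∀ i, AffineIndependent ℝ (v i)) ∧ P = ⋃ i, convexHull ℝ (Set.range (v i)))
    (X : Set (E n)) (hXP : X ⊆ P) (hXcl : IsClosed X)
    (x : E n) (hx : x ∈ X) (u : Fin k → E n) (hu : IsBSTangent X x u) :
    ∃ lam : Fin k → ℝ, (∀ i, 0 < lam i) ∧ cSimplex x u lam ⊆ P := by
  classical
  obtain ⟨z, _, hzX, hzx, _, hres⟩ := hu
  obtain ⟨N, m, v, hvind, rfl⟩ := hP
  -- pigeonhole: some simplex contains infinitely many z i
  have hcover : (Set.univ : Set ℕ) ⊆ ⋃ t : Fin N, {i | z i ∈ convexHull ℝ (Set.range (v t))} := by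
    intro i _
    have := hXP (hzX i)
    simpa [Set.mem_iUnion] using this
  have hpig : ∃ t : Fin N, {i | z i ∈ convexHull ℝ (Set.range (v t))}.Infinite := by
    by_contra h
    push_neg at h
    exact Set.infinite_univ (Set.Finite.subset (Set.finite_iUnion h) hcover)
  obtain ⟨t, ht⟩ := hpig
  obtain ⟨φ, hφmono, hφ⟩ :=
    extraction_of_frequently_atTop (Nat.frequently_atTop_iff_infinite.2 ht)
  set z' : ℕ → E n := z ∘ φ with hz'
  have hz'x : Tendsto z' atTop (𝓝 x) := hzx.comp hφmono.tendsto_atTop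
  have hres' : ∀ s : Fin k,
      Tendsto (fun i => ‖resid u s (z' i - x)‖⁻¹ • resid u s (z' i - x)) atTop (𝓝 (u s)) :=
    fun s => (hres s).comp hφmono.tendsto_atTop
  -- extend (v t) to an affine basis
  have hind : AffineIndependent ℝ (fun p => (p : E n) : Set.range (v t) → E n) :=
    (hvind t).range
  obtain ⟨t', hsub, hind', hspan⟩ := exists_subset_affineIndependent_affineSpan_eq_top hind
  have hspan' : affineSpan ℝ (Set.range (fun p => (p : E n) : t' → E n)) = ⊤ := by
    rwa [Subtype.range_coe]
  let b : AffineBasis t' ℝ (E n) := ⟨fun p => (p : E n), hind', hspan'⟩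
  have : Finite ↥t' := b.finite
  have : Fintype ↥t' := Fintype.ofFinite _
  set S : Set ↥t' := {i | (i : E n) ∈ Set.range (v t)} with hS
  have himg : (fun p : ↥t' => (p : E n)) '' S = Set.range (v t) := by
    apply le_antisymm
    · rintro _ ⟨i, hi, rfl⟩; exact hi
    · intro y hy
      exact ⟨⟨y, hsub hy⟩, hy, rfl⟩
  have hbS : ⇑b '' S = Set.range (v t) := himg
  -- the constraints
  set F : (↥t' ⊕ ↥t') → (E n →ᵃ[ℝ] ℝ) := fun j =>
    Sum.elim (fun i => -(b.coord i)) (fun i => if i ∈ S then 0 else b.coord i) j with hF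
  have hchar : {y : E n | ∀ j, F j y ≤ 0} = convexHull ℝ (Set.range (v t)) := by
    rw [← hbS, hull_char b S]
    ext y
    constructor
    · intro hy
      have h0 : ∀ i, 0 ≤ b.coord i y := by
        intro i
        have := hy (Sum.inl i)
        simpa [hF] using this
      refine ⟨h0, fun i hi => ?_⟩
      have := hy (Sum.inr i)
      rw [hF] at this
      simp only [Sum.elim_inr, if_neg hi] at this
      exact le_antisymm this (h0 i)
    · rintro ⟨h0, hz0⟩ j
      rcases j with i | i
      · simpa [hF] using h0 i
      · rw [hF]
        simp only [Sum.elim_inr]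
        split_ifs with hi
        · simp
        · rw [hz0 i hi]
  have hzcon : ∀ j i, F j (z' i) ≤ 0 := by
    intro j i
    have : z' i ∈ {y : E n | ∀ j, F j y ≤ 0} := by
      rw [hchar]; exact hφ i
    exact this j
  obtain ⟨lam, hlam, hsub'⟩ := keyA F x u z' hzcon hz'x hres'
  refine ⟨lam, hlam, ?_⟩
  refine hsub'.trans ?_
  rw [hchar]
  exact Set.subset_iUnion (fun t : Fin N => convexHull ℝ (Set.range (v t))) t
end
end

section
/- Let S ⊆ ℝⁿ be a simplex, z ∈ S, F the smallest face of S containing z (equivalently z ∈ relint F), and u a unit vector with z + ℝ_{≥0}u ⊆ aff(S). Suppose that for every facet H of S with F ⊆ H, the ray z + ℝ_{>0}u lies in the closed half-space of aff(S) bounded by aff(H) and containing S. Then there exists ε > 0 with z + εu ∈ S. -/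
open Filter Topology

noncomputable section

/-- Let `z ∈ S` with `F = conv(v '' W)` the smallest face of `S` containing
`z` (i.e. `z ∈ relint F`), and let `u` be a unit vector with `z + ℝ_{≥0}u ⊆ aff(S)` such that
for every facet `H ⊇ F` the ray `z + ℝ_{>0}u` lies in the closed half-space of `aff(S)` bounded
by `aff(H)` containing `S` (expressed via affine functionals vanishing on `H`, nonnegative on
`S`). Then `z + εu ∈ S` for some `ε > 0`. -/
theorem stmt10 {n m : ℕ} (v : Fin (m+1) → E n) (hv : AffineIndependent ℝ v)
    (z : E n) (hz : z ∈ convexHull ℝ (Set.range v))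
    (W : Set (Fin (m+1))) (hzF : z ∈ intrinsicInterior ℝ (convexHull ℝ (v '' W)))
    (u : E n) (hu : ‖u‖ = 1)
    (hray : ∀ t : ℝ, 0 ≤ t → z + t • u ∈ affineSpan ℝ (Set.range v))
    (hhalf : ∀ i₀ : Fin (m+1), i₀ ∉ W →
      ∀ f : E n →ᵃ[ℝ] ℝ, (∀ y ∈ convexHull ℝ (v '' {i | i ≠ i₀}), f y = 0) →
        (∀ y ∈ convexHull ℝ (Set.range v), 0 ≤ f y) →
        ∀ t : ℝ, 0 < t → 0 ≤ f (z + t • u)) :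
    ∃ ε : ℝ, 0 < ε ∧ z + ε • u ∈ convexHull ℝ (Set.range v) := by
  classical
  obtain ⟨t, hst, htind, htspan⟩ := exists_subset_affineIndependent_affineSpan_eq_top hv.range
  have hvmem : ∀ j, v j ∈ t := fun j => hst ⟨j, rfl⟩
  let B : AffineBasis t ℝ (E n) := ⟨((↑) : t → E n), htind, by rwa [Subtype.range_coe]⟩
  let f : Fin (m+1) → (E n →ᵃ[ℝ] ℝ) := fun j => B.coord ⟨v j, hvmem j⟩
  have hfv : ∀ j i, f j (v i) = if i = j then 1 else 0 := by
    intro j i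
    have h1 : f j (v i) = B.coord ⟨v j, hvmem j⟩ (B ⟨v i, hvmem i⟩) := rfl
    rw [h1, AffineBasis.coord_apply]
    by_cases h : i = j
    · simp [h]
    · rw [if_neg, if_neg h]
      intro hc
      exact h (hv.injective (Subtype.ext_iff.mp hc)).symm
  -- nonnegativity on the simplex
  have hf0 : ∀ j, ∀ y ∈ convexHull ℝ (Set.range v), 0 ≤ f j y := by
    intro j y hy
    rw [convexHull_range_eq_exists_affineCombination] at hy
    obtain ⟨s, w, hw0, hw1, rfl⟩ := hy
    rw [Finset.map_affineCombination _ _ _ hw1,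
      Finset.affineCombination_eq_linear_combination _ _ _ hw1]
    refine Finset.sum_nonneg fun i hi => ?_
    have := hfv j i
    simp only [Function.comp_apply, smul_eq_mul, this]
    by_cases h : i = j
    · simpa [h] using hw0 i hi
    · simp [h]
  -- vanishing on sub-facets
  have hker : ∀ j, ∀ (A : Set (Fin (m+1))), j ∉ A → ∀ y ∈ convexHull ℝ (v '' A), f j y = 0 := by
    intro j A hjA y hy
    rw [Set.image_eq_range, convexHull_range_eq_exists_affineCombination] at hy
    obtain ⟨s, w, hw0, hw1, rfl⟩ := hy
    rw [Finset.map_affineCombination _ _ _ hw1,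
      Finset.affineCombination_eq_linear_combination _ _ _ hw1]
    refine Finset.sum_eq_zero fun i hi => ?_
    have hij : (i : Fin (m+1)) ≠ j := fun h => hjA (h ▸ i.2)
    simp [Function.comp, hfv j i, hij]
  have hfw : ∀ j (x w : E n), f j (x + w) = f j x + (f j).linear w := by
    intro j x w
    have : x + w = w +ᵥ x := add_comm _ _
    rw [this, AffineMap.map_vadd, vadd_eq_add, add_comm]
  have hzFmem : z ∈ convexHull ℝ (v '' W) := intrinsicInterior_subset hzF
  -- positivity of coordinates in W at z
  have hpos : ∀ j ∈ W, 0 < f j z := by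
    intro j hj
    rcases (hf0 j z hz).lt_or_eq with h | h
    · exact h
    exfalso
    have h0 : f j z = 0 := h.symm
    set F := convexHull ℝ (v '' W) with hF
    obtain ⟨y, hy, hyz⟩ := mem_intrinsicInterior.mp hzF
    obtain ⟨δ, hδ, hball⟩ := Metric.mem_nhds_iff.mp (mem_interior_iff_mem_nhds.mp hy)
    have hqF : v j ∈ F := subset_convexHull ℝ _ ⟨j, hj, rfl⟩
    have hFsub : F ⊆ convexHull ℝ (Set.range v) :=
      convexHull_mono (Set.image_subset_range v W)
    have hqspan : v j ∈ affineSpan ℝ F := subset_affineSpan ℝ F hqF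
    have hzspan : z ∈ affineSpan ℝ F := by rw [← hyz]; exact y.2
    by_cases hqz : v j = z
    · have := hfv j j
      rw [hqz, h0] at this
      simp at this
    have hr : 0 < ‖v j - z‖ := by
      rw [norm_pos_iff]
      exact sub_ne_zero.mpr hqz
    set L := (f j).linear (v j - z) with hL
    have hmem : ∀ s : ℝ, z + s • (v j - z) ∈ affineSpan ℝ F := by
      intro s
      have := (affineSpan ℝ F).smul_vsub_vadd_mem s hqspan hzspan hzspan
      simpa [vsub_eq_sub, vadd_eq_add, add_comm] using this
    have hinF : ∀ s : ℝ, |s| * ‖v j - z‖ < δ → z + s • (v j - z) ∈ F := by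
      intro s hs
      have hdist : dist (⟨z + s • (v j - z), hmem s⟩ : affineSpan ℝ F) y < δ := by
        rw [Subtype.dist_eq, hyz]
        simpa [dist_eq_norm, norm_smul, abs_mul] using hs
      exact hball hdist
    have hkey : ∀ s : ℝ, |s| * ‖v j - z‖ < δ → 0 ≤ s * L := by
      intro s hs
      have h1 := hf0 j _ (hFsub (hinF s hs))
      rw [hfw, h0, zero_add] at h1
      simpa [hL, map_smul, smul_eq_mul] using h1
    set s₀ : ℝ := δ / (2 * ‖v j - z‖) with hs₀
    have hs₀pos : 0 < s₀ := by positivity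
    have hsmall : ∀ s : ℝ, |s| = s₀ → |s| * ‖v j - z‖ < δ := by
      intro s hs
      rw [hs, hs₀, div_mul_eq_mul_div]
      rw [div_lt_iff₀ (by positivity)]
      nlinarith
    have hp := hkey s₀ (hsmall s₀ (abs_of_pos hs₀pos))
    have hn := hkey (-s₀) (hsmall (-s₀) (by rw [abs_neg]; exact abs_of_pos hs₀pos))
    have hL0 : L = 0 := by nlinarith
    have : f j (v j) = 0 := by
      have : v j = z + (v j - z) := by abel
      rw [this, hfw, h0, ← hL, hL0, add_zero]
    rw [hfv j j] at this
    simp at this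
  -- coordinates of the ray
  set c : Fin (m+1) → ℝ := fun j => f j z with hc
  set sl : Fin (m+1) → ℝ := fun j => (f j).linear u with hsl
  have hft : ∀ j (τ : ℝ), f j (z + τ • u) = c j + τ * sl j := by
    intro j τ
    rw [hfw]
    simp [hc, hsl, map_smul, smul_eq_mul]
  have key : ∀ j, 0 < c j ∨ (c j = 0 ∧ 0 ≤ sl j) := by
    intro j
    by_cases hj : j ∈ W
    · exact Or.inl (hpos j hj)
    · right
      have hc0 : c j = 0 := hker j W hj z hzFmem
      have h1 := hhalf j hj (f j) (hker j {i | i ≠ j} (by simp)) (hf0 j) 1 one_pos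
      rw [hft, hc0, zero_add, one_mul] at h1
      exact ⟨hc0, h1⟩
  set ε : ℝ := Finset.univ.inf' Finset.univ_nonempty
      (fun j => if 0 < c j then c j / (1 + |sl j|) else 1) with hε
  have hεpos : 0 < ε := by
    rw [hε, Finset.lt_inf'_iff]
    intro j _
    by_cases h : 0 < c j <;> simp [h]
    positivity
  have hεle : ∀ j, 0 < c j → ε ≤ c j / (1 + |sl j|) := by
    intro j h
    have := Finset.inf'_le (fun j => if 0 < c j then c j / (1 + |sl j|) else 1)
      (Finset.mem_univ j)
    rwa [if_pos h, ← hε] at this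
  have hnn : ∀ j, 0 ≤ c j + ε * sl j := by
    intro j
    rcases key j with h | ⟨h0, hs⟩
    · have h1 := hεle j h
      rw [le_div_iff₀ (by positivity)] at h1
      have h2 : -|sl j| ≤ sl j := neg_abs_le _
      nlinarith [abs_nonneg (sl j)]
    · rw [h0, zero_add]
      positivity
  refine ⟨ε, hεpos, ?_⟩
  obtain ⟨w, hw1, hwz⟩ := eq_affineCombination_of_mem_affineSpan_of_fintype (hray ε hεpos.le)
  have hwj : ∀ j, w j = c j + ε * sl j := by
    intro j
    have h1 := congrArg (f j) hwz
    rw [Finset.map_affineCombination _ _ _ hw1,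
      Finset.affineCombination_eq_linear_combination _ _ _ hw1, hft] at h1
    rw [h1]
    simp only [Function.comp_apply, smul_eq_mul, hfv, mul_ite, mul_one, mul_zero]
    rw [Finset.sum_ite_eq' Finset.univ j w]
    simp
  rw [hwz]
  exact affineCombination_mem_convexHull (fun i _ => by rw [hwj]; exact hnn i) hw1
end
end

section
/- Let S ⊆ ℝⁿ be a simplex which is affinely (linearly) mapped by η into ℝ², let x ∈ ℝ², and suppose S ∩ η⁻¹({x}) is a union of faces of S. Then S ∩ η⁻¹({x}) is a single face of S. -/
open Filter Topology

noncomputable section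

/-- If an affine map `η : ℝⁿ → ℝ²` is such that `S ∩ η⁻¹{x}` is a union of
faces of the simplex `S = conv(range v)`, then `S ∩ η⁻¹{x}` is a single face of `S`. -/
theorem stmt15 {n m : ℕ} (v : Fin (m+1) → E n) (hv : AffineIndependent ℝ v)
    (η : E n →ᵃ[ℝ] E 2) (x : E 2)
    (h : ∃ 𝒲 : Set (Set (Fin (m+1))),
      convexHull ℝ (Set.range v) ∩ η ⁻¹' {x} = ⋃ W ∈ 𝒲, convexHull ℝ (v '' W)) :
    ∃ W : Set (Fin (m+1)),
      convexHull ℝ (Set.range v) ∩ η ⁻¹' {x} = convexHull ℝ (v '' W) := by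
  obtain ⟨𝒲, h𝒲⟩ := h
  set A := convexHull ℝ (Set.range v) ∩ η ⁻¹' {x} with hA
  refine ⟨{j | v j ∈ A}, Set.Subset.antisymm ?_ ?_⟩
  · intro y hy
    rw [h𝒲] at hy
    obtain ⟨W, hW, hyW⟩ := Set.mem_iUnion₂.mp hy
    refine convexHull_mono ?_ hyW
    rintro _ ⟨j, hj, rfl⟩
    refine ⟨j, ?_, rfl⟩
    have : v j ∈ convexHull ℝ (v '' W) := subset_convexHull ℝ _ ⟨j, hj, rfl⟩
    have : v j ∈ ⋃ W ∈ 𝒲, convexHull ℝ (v '' W) := Set.mem_iUnion₂.mpr ⟨W, hW, this⟩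
    rwa [← h𝒲] at this
  · apply convexHull_min
    · rintro _ ⟨j, hj, rfl⟩; exact hj
    · exact ((convex_convexHull ℝ _).inter ((convex_singleton x).affine_preimage η))
end
end
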